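/- (The *-operation preserves pairs of weak ribbons.) Let α, β, μ, ν be partitions with n parts such that α ⊆ μ, β ⊆ ν, and both μ/α and ν/β are weak ribbons, i.e., μ_{k+1} ≤ α_k + 1 and ν_{k+1} ≤ β_k + 1 for all 1 ≤ k < n. Then λ(μ,ν)_{k+1} ≤ λ(α,β)_k + 1 and ρ(μ,ν)_{k+1} ≤ ρ(α,β)_k + 1 for all 1 ≤ k < n; that is, the skew shapes λ(μ,ν)/λ(α,β) and ρ(μ,ν)/ρ(α,β) are again weak ribbons. -/

import Mathlib

/-- A partition with `n` (possibly zero) parts: a weakly decreasing sequence of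
nonnegative integers, recorded 0-indexed, vanishing from index `n` on. -/
def IsPartitionN (n : ℕ) (μ : ℕ → ℕ) : Prop :=
  Antitone μ ∧ ∀ i, n ≤ i → μ i = 0

/-- A partition (finitely many nonzero parts), 0-indexed. -/
def IsPartition (μ : ℕ → ℕ) : Prop :=
  Antitone μ ∧ ∃ N, ∀ i, N ≤ i → μ i = 0

/-- `λ(μ,ν)_k = μ_k − k + #{j : 1 ≤ j ≤ n, ν_j − j ≥ μ_k − k}`, 0-indexed,
so the (k+1)-st part of `λ(μ,ν)`, as an integer. -/
def lamStar (n : ℕ) (μ ν : ℕ → ℕ) (k : ℕ) : ℤ :=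
  (μ k : ℤ) - (k + 1) +
    ((Finset.range n).filter (fun j => (μ k : ℤ) - (k + 1) ≤ (ν j : ℤ) - (j + 1))).card

/-- `ρ(μ,ν)_j = ν_j − j + 1 + #{k : 1 ≤ k ≤ n, μ_k − k > ν_j − j}`, 0-indexed. -/
def rhoStar (n : ℕ) (μ ν : ℕ → ℕ) (j : ℕ) : ℤ :=
  (ν j : ℤ) - (j + 1) + 1 +
    ((Finset.range n).filter (fun k => (ν j : ℤ) - (j + 1) < (μ k : ℤ) - (k + 1))).card

/-- `λ(μ,ν)` as a sequence of natural numbers. -/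
def lamStarN (n : ℕ) (μ ν : ℕ → ℕ) (k : ℕ) : ℕ := (lamStar n μ ν k).toNat

/-- `ρ(μ,ν)` as a sequence of natural numbers. -/
def rhoStarN (n : ℕ) (μ ν : ℕ → ℕ) (k : ℕ) : ℕ := (rhoStar n μ ν k).toNat

/-- The conjugate partition: `μ′_i = #{k : μ_k ≥ i}` (1-indexed), recorded 0-indexed. -/
noncomputable def conjP (μ : ℕ → ℕ) (i : ℕ) : ℕ := {k : ℕ | i + 1 ≤ μ k}.ncard

/-- Remove a full column of height `k`: subtract 1 from the first `k` parts. -/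
def removeCol (k : ℕ) (σ : ℕ → ℕ) : ℕ → ℕ := fun j => if j < k then σ j - 1 else σ j

/-- An LR filling of the skew shape `θ/ν` of type `μ` (all 0-indexed; cell `(i,j)`
is row `i+1`, column `j+1`; the entry `0` marks cells outside the skew shape).
Rows weakly increase, columns strictly increase, the entry `m+1` occurs `μ m`
times, and the reverse reading word (rows top to bottom, each row right to left)
is a lattice permutation. It is required that `ν ⊆ θ`. -/
def IsLRFilling (θ ν μ : ℕ → ℕ) (T : ℕ → ℕ → ℕ) : Prop :=
  (∀ i, ν i ≤ θ i) ∧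
  (∀ i j, ν i ≤ j → j < θ i → 1 ≤ T i j) ∧
  (∀ i j, ¬(ν i ≤ j ∧ j < θ i) → T i j = 0) ∧
  (∀ i j j', ν i ≤ j → j ≤ j' → j' < θ i → T i j ≤ T i j') ∧
  (∀ i i' j, i < i' → ν i ≤ j → j < θ i → ν i' ≤ j → j < θ i' → T i j < T i' j) ∧
  (∀ m : ℕ, {p : ℕ × ℕ | T p.1 p.2 = m + 1}.ncard = μ m) ∧
  (∀ m i j : ℕ,
    {p : ℕ × ℕ | T p.1 p.2 = m + 2 ∧ (p.1 < i ∨ (p.1 = i ∧ j ≤ p.2))}.ncard ≤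
    {p : ℕ × ℕ | T p.1 p.2 = m + 1 ∧ (p.1 < i ∨ (p.1 = i ∧ j ≤ p.2))}.ncard)

/-- The Littlewood–Richardson coefficient `c_{μν}^θ`: the number of LR fillings
of `θ/ν` of type `μ` (equal to `0` when `ν ⊄ θ`). -/
noncomputable def lrCoeff (μ ν θ : ℕ → ℕ) : ℕ := Nat.card {T : ℕ → ℕ → ℕ // IsLRFilling θ ν μ T}

/-!
With the shifted parts `s_μ(k) = μ_k − k`, strictly decreasing for a partition `μ`, both `λ` and
`ρ` have the form `x + #{j ≤ n : x ≤ c_j}` for such a sequence `c`. This is monotone in `x`, since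
raising `x` by one drops at most one index from the count (`c` is injective). The weak ribbon
condition `μ_{k+1} ≤ α_k + 1` reads `s_μ(k+1) ≤ s_α(k)`; shifting indices by one, it bounds the
count for `s_μ` by the count for `s_α` plus one, the index `j = 1`, and this is the `+ 1` of a
weak ribbon.
-/

open Finset

/-- The paper's `μ_k − k`, with `k` 1-indexed. -/
def shiftedParts (μ : ℕ → ℕ) (k : ℕ) : ℤ := (μ k : ℤ) - (k + 1)

def countGE (n : ℕ) (c : ℕ → ℤ) (x : ℤ) : ℕ := #{j ∈ range n | x ≤ c j}

lemma strictAnti_shiftedParts {μ : ℕ → ℕ} (hμ : Antitone μ) : StrictAnti (shiftedParts μ) := by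
  intro j j' hjj'
  have : μ j' ≤ μ j := hμ hjj'.le
  unfold shiftedParts
  omega

lemma shiftedParts_succ_le {μ α : ℕ → ℕ} {k : ℕ} (h : μ (k + 1) ≤ α k + 1) :
    shiftedParts μ (k + 1) ≤ shiftedParts α k := by
  unfold shiftedParts
  push_cast
  omega

lemma lamStar_eq (n : ℕ) (μ ν : ℕ → ℕ) (k : ℕ) :
    lamStar n μ ν k = shiftedParts μ k + countGE n (shiftedParts ν) (shiftedParts μ k) :=
  rfl

lemma rhoStar_eq (n : ℕ) (μ ν : ℕ → ℕ) (j : ℕ) :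
    rhoStar n μ ν j =
      (shiftedParts ν j + 1) + countGE n (shiftedParts μ) (shiftedParts ν j + 1) :=
  rfl

section countGE

variable {n : ℕ} {c c' : ℕ → ℤ}

lemma countGE_le_countGE_succ_add_one (hc : Function.Injective c) (x : ℤ) :
    countGE n c x ≤ countGE n c (x + 1) + 1 := by
  unfold countGE
  have hsplit :
      {j ∈ range n | x ≤ c j} ⊆ {j ∈ range n | x + 1 ≤ c j} ∪ {j ∈ range n | c j = x} := by
    intro j hj
    obtain ⟨hjn, hxj⟩ := mem_filter.mp hj
    rcases hxj.lt_or_eq with hlt | heq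
    · exact mem_union_left _ (mem_filter.mpr ⟨hjn, hlt⟩)
    · exact mem_union_right _ (mem_filter.mpr ⟨hjn, heq.symm⟩)
  have hattained : #{j ∈ range n | c j = x} ≤ 1 :=
    card_le_one.mpr fun a ha b hb => hc ((mem_filter.mp ha).2.trans (mem_filter.mp hb).2.symm)
  exact (card_le_card hsplit).trans ((card_union_le _ _).trans (by omega))

lemma monotone_add_countGE (hc : Function.Injective c) :
    Monotone fun x => x + (countGE n c x : ℤ) :=
  monotone_int_of_le_succ fun x => by
    have := countGE_le_countGE_succ_add_one (n := n) hc x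
    omega

lemma countGE_le_countGE_add_one (hcc : ∀ j, j + 1 < n → c (j + 1) ≤ c' j) (x : ℤ) :
    countGE n c x ≤ countGE n c' x + 1 := by
  obtain _ | m := n
  · simp [countGE]
  calc countGE (m + 1) c x
      = ∑ j ∈ range m, (if x ≤ c (j + 1) then 1 else 0) + if x ≤ c 0 then 1 else 0 := by
        rw [countGE, card_filter, sum_range_succ']
    _ ≤ ∑ j ∈ range m, (if x ≤ c' j then 1 else 0) + 1 := by
        gcongr with j hj
        · have := hcc j (by simpa using hj)
          split_ifs <;> omega
        · split_ifs <;> omega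
    _ ≤ countGE (m + 1) c' x + 1 := by
        rw [countGE, card_filter, sum_range_succ]
        omega

lemma add_countGE_le_add_countGE_add_one (hc : Function.Injective c)
    (hcc : ∀ j, j + 1 < n → c (j + 1) ≤ c' j) {x x' : ℤ} (hx : x ≤ x') :
    x + (countGE n c x : ℤ) ≤ x' + countGE n c' x' + 1 := by
  have hshift := countGE_le_countGE_add_one hcc x'
  calc x + (countGE n c x : ℤ) ≤ x' + countGE n c x' := monotone_add_countGE hc hx
    _ ≤ x' + countGE n c' x' + 1 := by omega

end countGE

theorem star_preserves_weak_ribbons_general (n : ℕ) (α β μ ν : ℕ → ℕ)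
    (hμ : IsPartitionN n μ) (hν : IsPartitionN n ν)
    (hrib1 : ∀ k, k + 1 < n → μ (k + 1) ≤ α k + 1)
    (hrib2 : ∀ k, k + 1 < n → ν (k + 1) ≤ β k + 1) :
    (∀ k, k + 1 < n → lamStar n μ ν (k + 1) ≤ lamStar n α β k + 1) ∧
    (∀ k, k + 1 < n → rhoStar n μ ν (k + 1) ≤ rhoStar n α β k + 1) := by
  have hribμ : ∀ k, k + 1 < n → shiftedParts μ (k + 1) ≤ shiftedParts α k :=
    fun k hk => shiftedParts_succ_le (hrib1 k hk)
  have hribν : ∀ k, k + 1 < n → shiftedParts ν (k + 1) ≤ shiftedParts β k :=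
    fun k hk => shiftedParts_succ_le (hrib2 k hk)
  refine ⟨fun k hk => ?_, fun k hk => ?_⟩
  · rw [lamStar_eq, lamStar_eq]
    exact add_countGE_le_add_countGE_add_one (strictAnti_shiftedParts hν.1).injective hribν
      (hribμ k hk)
  · rw [rhoStar_eq, rhoStar_eq]
    exact add_countGE_le_add_countGE_add_one (strictAnti_shiftedParts hμ.1).injective hribμ
      (by linarith [hribν k hk])

/-- The `*`-operation preserves pairs of weak ribbons: if `μ/α` and `ν/β` are
weak ribbons, then so are `λ(μ,ν)/λ(α,β)` and `ρ(μ,ν)/ρ(α,β)`. -/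
theorem star_preserves_weak_ribbons (n : ℕ) (α β μ ν : ℕ → ℕ)
    (hα : IsPartitionN n α) (hβ : IsPartitionN n β)
    (hμ : IsPartitionN n μ) (hν : IsPartitionN n ν)
    (hαμ : ∀ k, α k ≤ μ k) (hβν : ∀ k, β k ≤ ν k)
    (hrib1 : ∀ k, k + 1 < n → μ (k + 1) ≤ α k + 1)
    (hrib2 : ∀ k, k + 1 < n → ν (k + 1) ≤ β k + 1) :
    (∀ k, k + 1 < n → lamStar n μ ν (k + 1) ≤ lamStar n α β k + 1) ∧
    (∀ k, k + 1 < n → rhoStar n μ ν (k + 1) ≤ rhoStar n α β k + 1) :=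
  star_preserves_weak_ribbons_general n α β μ ν hμ hν hrib1 hrib2
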